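/- arXiv:2601.10249 — 3 statements merged into one kernel-verified Lean document; each statement's English description precedes it below -/
import Mathlib

section
/- Uniform tail asymptotics (Claim 'Asymptotics of an integral'): Fix an integer Δ ≥ 3. For every η > 0 there exists T > 0 (depending only on Δ and η) such that for every degree-constraint distribution p = (p_2,…,p_Δ) and every t ≥ T, the improper integral ∫_t^∞ (λ_p'(s))² ds converges and |t · ∫_t^∞ (λ_p'(s))² ds − 1| ≤ η. -/
open Real MeasureTheory Filter

noncomputable section

/-- Tail sums: `s_k = Σ_{d=k}^Δ r_d` (also used as `q_k` for distributions `p`). -/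
def tailS (Δ : ℕ) (r : ℕ → ℝ) (k : ℕ) : ℝ := ∑ d ∈ Finset.Icc k Δ, r d

/-- Membership in the set `R_Δ`: `r_2 = -1`, `r_k ≥ 0` for `3 ≤ k ≤ Δ`, `r_k = 0` for `k > Δ`,
and `Σ_{k=3}^Δ r_k = 1`. -/
def memR (Δ : ℕ) (r : ℕ → ℝ) : Prop :=
  r 2 = -1 ∧ (∀ k, 3 ≤ k → k ≤ Δ → 0 ≤ r k) ∧ (∀ k, Δ < k → r k = 0) ∧
    (∑ k ∈ Finset.Icc 3 Δ, r k) = 1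

/-- The Molloy–Reed constant `Υ_r = Σ_{k=3}^Δ k(k-2) r_k`. -/
def Upsilon (Δ : ℕ) (r : ℕ → ℝ) : ℝ := ∑ k ∈ Finset.Icc 3 Δ, (k : ℝ) * ((k : ℝ) - 2) * r k

/-- `Λ_r(t) = λ'(t) · ∫_0^{λ(t)} e^x/(1+x)² · (Σ_{k=2}^{Δ-1} x^k/k! · s_{k+1}) dx`. -/
def LamErr (lam : ℝ → ℝ) (Δ : ℕ) (r : ℕ → ℝ) (t : ℝ) : ℝ :=
  deriv lam t * ∫ x in (0:ℝ)..(lam t),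
    Real.exp x / (1 + x) ^ 2 *
      ∑ k ∈ Finset.Icc 2 (Δ - 1), x ^ k / (Nat.factorial k : ℝ) * tailS Δ r (k + 1)

/-- `H_r(t) = e^{-λ(t)} (Λ_r'(t) - λ'(t)Λ_r(t) + λ'(t) Σ_{k=0}^{Δ-2} λ(t)^k/k! · r_{k+2})`. -/
def Herr (lam : ℝ → ℝ) (Δ : ℕ) (r : ℕ → ℝ) (t : ℝ) : ℝ :=
  Real.exp (-lam t) *
    (deriv (LamErr lam Δ r) t - deriv lam t * LamErr lam Δ r t +
      deriv lam t * ∑ k ∈ Finset.range (Δ - 1), lam t ^ k / (Nat.factorial k : ℝ) * r (k + 2))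

/-- `I_r(t) = e^{-λ(t)} ( -Λ_r(t) + Σ_{k=1}^{Δ-2} λ(t)^k/k! · s_{k+2})`. -/
def Ierr (lam : ℝ → ℝ) (Δ : ℕ) (r : ℕ → ℝ) (t : ℝ) : ℝ :=
  Real.exp (-lam t) *
    (-LamErr lam Δ r t +
      ∑ k ∈ Finset.Icc 1 (Δ - 2), lam t ^ k / (Nat.factorial k : ℝ) * tailS Δ r (k + 2))

/-- `u(t) = 1 + λ(t) ∫_0^t (λ'(s)-1)/λ(s)² ds`. -/
def uAux (lam : ℝ → ℝ) (t : ℝ) : ℝ :=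
  1 + lam t * ∫ s in (0:ℝ)..t, (deriv lam s - 1) / (lam s) ^ 2

/-- `α_r(t) = -∫_0^t u(s) H_r(s) λ(s) ds`. -/
def alphaAux (lam : ℝ → ℝ) (Δ : ℕ) (r : ℕ → ℝ) (t : ℝ) : ℝ :=
  -∫ s in (0:ℝ)..t, uAux lam s * Herr lam Δ r s * lam s

/-- `β_r(t) = ∫_0^t H_r(s) λ(s)² ds`. -/
def betaAux (lam : ℝ → ℝ) (Δ : ℕ) (r : ℕ → ℝ) (t : ℝ) : ℝ :=
  ∫ s in (0:ℝ)..t, Herr lam Δ r s * (lam s) ^ 2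

/-- `ω_r(t) = α_r(t) λ(t) + β_r(t) u(t)`. -/
def omegaAux (lam : ℝ → ℝ) (Δ : ℕ) (r : ℕ → ℝ) (t : ℝ) : ℝ :=
  alphaAux lam Δ r t * lam t + betaAux lam Δ r t * uAux lam t

/-- `t^-_{p,δ} = (1-δ)/(ε Υ_r)`. -/
def tMinus (Δ : ℕ) (r : ℕ → ℝ) (ε δ : ℝ) : ℝ := (1 - δ) / (ε * Upsilon Δ r)

/-- `t^+_{p,δ} = (1+δ)/(ε Υ_r)`. -/
def tPlus (Δ : ℕ) (r : ℕ → ℝ) (ε δ : ℝ) : ℝ := (1 + δ) / (ε * Upsilon Δ r)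

/-- `w^-_{p,δ}`. -/
def wMinus (lam : ℝ → ℝ) (Δ : ℕ) (r : ℕ → ℝ) (ε δ : ℝ) (t : ℝ) : ℝ :=
  if t ≤ tMinus Δ r ε δ then lam t + (1 + δ / 2) * ε * omegaAux lam Δ r t
  else lam (tMinus Δ r ε δ) + (1 + δ / 2) * ε * omegaAux lam Δ r (tMinus Δ r ε δ)

/-- `w^+_{p,δ}`. -/
def wPlus (lam : ℝ → ℝ) (Δ : ℕ) (r : ℕ → ℝ) (ε δ : ℝ) (t : ℝ) : ℝ :=
  if t ≤ tPlus Δ r ε δ then lam t + (1 - δ / 2) * ε * omegaAux lam Δ r t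
  else lam (tPlus Δ r ε δ) + (1 - δ / 2) * ε * omegaAux lam Δ r (tPlus Δ r ε δ)

/-- `Ī^-_{p,δ}(t) = e^{-λ(t)} + (1-δ) ε I_r(t)`. -/
def IbarMinus (lam : ℝ → ℝ) (Δ : ℕ) (r : ℕ → ℝ) (ε δ : ℝ) (t : ℝ) : ℝ :=
  Real.exp (-lam t) + (1 - δ) * ε * Ierr lam Δ r t

/-- `Ī^+_{p,δ}(t) = e^{-λ(t)} + (1+δ) ε I_r(t)`. -/
def IbarPlus (lam : ℝ → ℝ) (Δ : ℕ) (r : ℕ → ℝ) (ε δ : ℝ) (t : ℝ) : ℝ :=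
  Real.exp (-lam t) + (1 + δ) * ε * Ierr lam Δ r t

/-- `Ĩ_p(x) = e^{-x} (1 + ε Σ_{k=1}^{Δ-2} x^k/k! · s_{k+2})`. -/
def Itilde (Δ : ℕ) (r : ℕ → ℝ) (ε : ℝ) (x : ℝ) : ℝ :=
  Real.exp (-x) *
    (1 + ε * ∑ k ∈ Finset.Icc 1 (Δ - 2), x ^ k / (Nat.factorial k : ℝ) * tailS Δ r (k + 2))

/-!
With `c k = q_{k+1}` and `g = expPoly Δ c`, the equation reads `λ' = e^{-λ} g(λ)`. Since
`λ'² = λ' e^{-λ} g(λ)`, the substitution `x = λ(s)` gives `∫_t^∞ λ'² = Φ(λ(t))` with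
`Φ(x) = ∫_x^∞ e^{-y} g(y) dy`, and termwise `e^{-x} g(x) ≤ Φ(x) ≤ (1 + Δ²/x) e^{-x} g(x)`.
The ratio `ψ = e^λ / g(λ)` has `ψ' = 1 - g'(λ)/g(λ) ∈ [1 - Δ/λ, 1]`, and `λ(t) ≥ log (1 + t)`
because `(e^λ)' = g(λ) ≥ 1`. Hence `ψ(t) ~ t` and `t Φ(λ(t)) = (t / ψ(t)) (1 + O(Δ²/λ(t))) → 1`,
with explicit error bounds that do not depend on `p`.
-/

open Set Topology
open scoped Nat

def expPoly (n : ℕ) (c : ℕ → ℝ) (x : ℝ) : ℝ := ∑ k ∈ Finset.range n, x ^ k / (k ! : ℝ) * c k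

theorem hasDerivAt_pow_succ_div_factorial (k : ℕ) (x : ℝ) :
    HasDerivAt (fun y : ℝ => y ^ (k + 1) / ((k + 1) ! : ℝ)) (x ^ k / (k ! : ℝ)) x := by
  refine ((hasDerivAt_pow (k + 1) x).div_const ((k + 1) ! : ℝ)).congr_deriv ?_
  rw [Nat.factorial_succ, Nat.cast_mul, Nat.add_sub_cancel]
  field_simp

theorem hasDerivAt_expPoly (n : ℕ) (c : ℕ → ℝ) (x : ℝ) :
    HasDerivAt (expPoly n c) (expPoly (n - 1) (fun k => c (k + 1)) x) x := by
  cases n with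
  | zero => exact hasDerivAt_const x (0 : ℝ)
  | succ n =>
    have h : expPoly (n + 1) c =
        fun y => ∑ k ∈ Finset.range n, y ^ (k + 1) / ((k + 1) ! : ℝ) * c (k + 1) + c 0 := by
      funext y
      simp [expPoly, Finset.sum_range_succ']
    rw [h]
    exact ((HasDerivAt.fun_sum fun k _ =>
      (hasDerivAt_pow_succ_div_factorial k x).mul_const (c (k + 1))).add_const (c 0))

theorem expPoly_apply_zero {n : ℕ} (hn : 0 < n) (c : ℕ → ℝ) : expPoly n c 0 = c 0 := by
  rw [expPoly, Finset.sum_eq_single_of_mem 0 (Finset.mem_range.2 hn)]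
  · simp
  · intro k _ hk
    simp [hk]

theorem expPoly_nonneg (n : ℕ) {c : ℕ → ℝ} (hc : ∀ k, 0 ≤ c k) {x : ℝ} (hx : 0 ≤ x) :
    0 ≤ expPoly n c x :=
  Finset.sum_nonneg fun k _ => by have := hc k; positivity

theorem le_expPoly {n : ℕ} (hn : 0 < n) {c : ℕ → ℝ} (hc : ∀ k, 0 ≤ c k) {x : ℝ} (hx : 0 ≤ x) :
    c 0 ≤ expPoly n c x := by
  obtain ⟨m, rfl⟩ := Nat.exists_eq_add_of_lt hn
  rw [expPoly, Finset.sum_range_succ']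
  simp only [pow_zero, Nat.factorial_zero, Nat.cast_one, div_one, one_mul]
  exact le_add_of_nonneg_left (Finset.sum_nonneg fun k _ => by have := hc (k + 1); positivity)

theorem mul_expPoly_pred_le (n : ℕ) {c : ℕ → ℝ} (hc : ∀ k, 0 ≤ c k) {x : ℝ} (hx : 0 ≤ x) :
    x * expPoly (n - 1) (fun k => c (k + 1)) x ≤ n * expPoly n c x := by
  cases n with
  | zero => simp [expPoly]
  | succ m =>
    have hterm : ∀ k ∈ Finset.range m, x * (x ^ k / (k ! : ℝ) * c (k + 1)) ≤
        (m + 1 : ℕ) * (x ^ (k + 1) / ((k + 1) ! : ℝ) * c (k + 1)) := by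
      intro k hk
      have hkm : ((k + 1 : ℕ) : ℝ) ≤ (m + 1 : ℕ) := by
        exact_mod_cast Nat.succ_le_succ (Finset.mem_range.1 hk).le
      have hpos : 0 ≤ x ^ (k + 1) / ((k + 1) ! : ℝ) * c (k + 1) := by
        have := hc (k + 1); positivity
      calc x * (x ^ k / (k ! : ℝ) * c (k + 1))
          = ((k + 1 : ℕ) : ℝ) * (x ^ (k + 1) / ((k + 1) ! : ℝ) * c (k + 1)) := by
            rw [Nat.factorial_succ, Nat.cast_mul, pow_succ]; field_simp
        _ ≤ _ := mul_le_mul_of_nonneg_right hkm hpos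
    have h0 : 0 ≤ (m + 1 : ℕ) * (x ^ 0 / ((0 ! : ℕ) : ℝ) * c 0) := by
      have := hc 0; positivity
    rw [expPoly, expPoly, Nat.add_sub_cancel, Finset.mul_sum, Finset.sum_range_succ', mul_add,
      Finset.mul_sum]
    exact le_add_of_le_of_nonneg (Finset.sum_le_sum hterm) h0

theorem pow_div_factorial_le_pow_div_factorial {x : ℝ} {i j : ℕ} (hij : i ≤ j) (hjx : (j : ℝ) ≤ x) :
    x ^ i / (i ! : ℝ) ≤ x ^ j / (j ! : ℝ) := by
  induction j, hij using Nat.le_induction with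
  | base => rfl
  | succ j _ ih =>
    have hx : 0 ≤ x := le_trans (Nat.cast_nonneg _) hjx
    have hj1 : (j : ℝ) + 1 ≤ x := by exact_mod_cast hjx
    refine (ih (by linarith)).trans ?_
    rw [Nat.factorial_succ, Nat.cast_mul, pow_succ, div_le_div_iff₀ (by positivity) (by positivity)]
    have : 0 ≤ x ^ j * (j ! : ℝ) := by positivity
    push_cast
    nlinarith

theorem pow_div_factorial_le_of_lt {x : ℝ} {j k : ℕ} (hjk : j < k) (hkx : (k : ℝ) ≤ x) :
    x ^ j / (j ! : ℝ) ≤ k / x * (x ^ k / (k ! : ℝ)) := by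
  have hx : 0 < x := lt_of_lt_of_le (by exact_mod_cast (Nat.zero_le j).trans_lt hjk) hkx
  have hj1k : ((j + 1 : ℕ) : ℝ) ≤ k := by exact_mod_cast hjk
  calc x ^ j / (j ! : ℝ) = ((j + 1 : ℕ) : ℝ) / x * (x ^ (j + 1) / ((j + 1) ! : ℝ)) := by
        rw [Nat.factorial_succ, Nat.cast_mul, pow_succ]; field_simp
    _ ≤ k / x * (x ^ k / (k ! : ℝ)) := by
        gcongr ?_ * ?_
        · gcongr
        · exact pow_div_factorial_le_pow_div_factorial hjk hkx

/-- `expPolyTail n c x = ∫_x^∞ e^{-y} expPoly n c y dy`, because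
`∫_x^∞ e^{-y} y^k/k! dy = e^{-x} Σ_{j ≤ k} x^j/j!`. -/
def expPolyTail (n : ℕ) (c : ℕ → ℝ) (x : ℝ) : ℝ :=
  ∑ k ∈ Finset.range n, c k * (exp (-x) * expPoly (k + 1) 1 x)

theorem hasDerivAt_exp_neg_mul_expPoly_one (k : ℕ) (x : ℝ) :
    HasDerivAt (fun y => exp (-y) * expPoly (k + 1) 1 y) (-(exp (-x) * (x ^ k / (k ! : ℝ)))) x := by
  have hexp : HasDerivAt (fun y => exp (-y)) (-exp (-x)) x := by
    simpa using (hasDerivAt_neg x).exp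
  refine (hexp.mul (hasDerivAt_expPoly (k + 1) 1 x)).congr_deriv ?_
  simp only [Nat.add_sub_cancel, Pi.one_apply, expPoly, Finset.sum_range_succ]
  ring

theorem hasDerivAt_expPolyTail (n : ℕ) (c : ℕ → ℝ) (x : ℝ) :
    HasDerivAt (expPolyTail n c) (-(exp (-x) * expPoly n c x)) x := by
  refine (HasDerivAt.fun_sum fun k _ =>
    (hasDerivAt_exp_neg_mul_expPoly_one k x).const_mul (c k)).congr_deriv ?_
  simp only [expPoly, Finset.mul_sum, ← Finset.sum_neg_distrib]
  exact Finset.sum_congr rfl fun k _ => by ring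

theorem tendsto_expPolyTail_atTop (n : ℕ) (c : ℕ → ℝ) :
    Tendsto (expPolyTail n c) atTop (𝓝 0) := by
  have hterm (k : ℕ) : Tendsto (fun x => exp (-x) * expPoly (k + 1) 1 x) atTop (𝓝 0) := by
    have := tendsto_finsetSum (Finset.range (k + 1)) fun j _ =>
      (tendsto_pow_mul_exp_neg_atTop_nhds_zero j).div_const (j ! : ℝ)
    simp only [zero_div, Finset.sum_const_zero] at this
    refine this.congr fun x => ?_
    simp only [expPoly, Pi.one_apply, mul_one, Finset.mul_sum]
    exact Finset.sum_congr rfl fun j _ => by ring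
  have := tendsto_finsetSum (Finset.range n) fun k _ => (hterm k).const_mul (c k)
  simp only [mul_zero, Finset.sum_const_zero] at this
  exact this

theorem exp_neg_mul_expPoly_le_expPolyTail (n : ℕ) {c : ℕ → ℝ} (hc : ∀ k, 0 ≤ c k) {x : ℝ}
    (hx : 0 ≤ x) : exp (-x) * expPoly n c x ≤ expPolyTail n c x := by
  rw [expPoly, expPolyTail, Finset.mul_sum]
  refine Finset.sum_le_sum fun k _ => ?_
  have hk : x ^ k / (k ! : ℝ) ≤ expPoly (k + 1) 1 x := by
    rw [expPoly, Finset.sum_range_succ]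
    simp only [Pi.one_apply, mul_one]
    exact le_add_of_nonneg_left (Finset.sum_nonneg fun j _ => by positivity)
  have := hc k
  calc exp (-x) * (x ^ k / (k ! : ℝ) * c k) = c k * (exp (-x) * (x ^ k / (k ! : ℝ))) := by ring
    _ ≤ c k * (exp (-x) * expPoly (k + 1) 1 x) := by gcongr

theorem expPoly_one_le {n k : ℕ} (hkn : k < n) {x : ℝ} (hnx : (n : ℝ) ≤ x) :
    expPoly (k + 1) 1 x ≤ (1 + n ^ 2 / x) * (x ^ k / (k ! : ℝ)) := by
  have hx : 0 < x := lt_of_lt_of_le (by exact_mod_cast (Nat.zero_le k).trans_lt hkn) hnx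
  have hkx : (k : ℝ) ≤ x := le_trans (by exact_mod_cast hkn.le) hnx
  have hsum : expPoly k 1 x ≤ k * (k / x * (x ^ k / (k ! : ℝ))) := by
    simpa [expPoly] using Finset.sum_le_sum fun j hj =>
      pow_div_factorial_le_of_lt (Finset.mem_range.1 hj) hkx
  have hk2 : (k : ℝ) * k ≤ n ^ 2 := by
    have : (k : ℝ) ≤ n := by exact_mod_cast hkn.le
    nlinarith [(Nat.cast_nonneg k : (0 : ℝ) ≤ k)]
  calc expPoly (k + 1) 1 x = expPoly k 1 x + x ^ k / (k ! : ℝ) := by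
        simp [expPoly, Finset.sum_range_succ]
    _ ≤ k * (k / x * (x ^ k / (k ! : ℝ))) + x ^ k / (k ! : ℝ) := by gcongr
    _ = (1 + k * k / x) * (x ^ k / (k ! : ℝ)) := by ring
    _ ≤ (1 + n ^ 2 / x) * (x ^ k / (k ! : ℝ)) := by gcongr

theorem expPolyTail_le (n : ℕ) {c : ℕ → ℝ} (hc : ∀ k, 0 ≤ c k) {x : ℝ} (hnx : (n : ℝ) ≤ x) :
    expPolyTail n c x ≤ (1 + n ^ 2 / x) * (exp (-x) * expPoly n c x) := by
  rw [expPoly, expPolyTail, Finset.mul_sum, Finset.mul_sum]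
  refine Finset.sum_le_sum fun k hk => ?_
  have := hc k
  calc c k * (exp (-x) * expPoly (k + 1) 1 x)
      ≤ c k * (exp (-x) * ((1 + n ^ 2 / x) * (x ^ k / (k ! : ℝ)))) := by
        gcongr; exact expPoly_one_le (Finset.mem_range.1 hk) hnx
    _ = _ := by ring

theorem exp_neg_mul_eq_inv_exp_div (x y : ℝ) : exp (-x) * y = (exp x / y)⁻¹ := by
  rw [inv_div, exp_neg, div_eq_inv_mul]

structure SolvesExpPolyODE (n : ℕ) (c : ℕ → ℝ) (lam : ℝ → ℝ) : Prop where
  differentiable : Differentiable ℝ lam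
  map_zero : lam 0 = 0
  deriv_eq : ∀ t, 0 ≤ t → deriv lam t = exp (-lam t) * expPoly n c (lam t)

namespace SolvesExpPolyODE

variable {n : ℕ} {c : ℕ → ℝ} {lam : ℝ → ℝ}

theorem hasDerivAt (h : SolvesExpPolyODE n c lam) {t : ℝ} (ht : 0 ≤ t) :
    HasDerivAt lam (exp (-lam t) * expPoly n c (lam t)) t :=
  h.deriv_eq t ht ▸ (h.differentiable t).hasDerivAt

/-- The solution cannot cross `0` downwards, since `λ' = c 0 = 1` wherever `λ = 0`. -/
theorem nonneg (h : SolvesExpPolyODE n c lam) (hn : 0 < n) (hc0 : c 0 = 1) {t : ℝ}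
    (ht : 0 ≤ t) : 0 ≤ lam t := by
  have key := image_le_of_deriv_right_lt_deriv_boundary' (f := fun s => -lam s) (a := 0) (b := t)
    (B := fun _ => 0) (B' := fun _ => 0) h.differentiable.continuous.neg.continuousOn
    (fun s hs => (h.hasDerivAt hs.1).neg.hasDerivWithinAt) (by simp [h.map_zero])
    continuousOn_const (fun _ _ => hasDerivWithinAt_const _ _ _) ?_ ⟨ht, le_rfl⟩
  · simpa using key
  · intro s _ hs
    simp [neg_eq_zero.1 hs, expPoly_apply_zero hn, hc0]

theorem one_le_expPoly (h : SolvesExpPolyODE n c lam) (hn : 0 < n) (hc0 : c 0 = 1)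
    (hc : ∀ k, 0 ≤ c k) {t : ℝ} (ht : 0 ≤ t) : 1 ≤ expPoly n c (lam t) :=
  hc0 ▸ le_expPoly hn hc (h.nonneg hn hc0 ht)

theorem one_add_le_exp (h : SolvesExpPolyODE n c lam) (hn : 0 < n) (hc0 : c 0 = 1)
    (hc : ∀ k, 0 ≤ c k) {t : ℝ} (ht : 0 ≤ t) : 1 + t ≤ exp (lam t) := by
  have hderiv : ∀ s, 0 ≤ s → HasDerivAt (fun s => exp (lam s)) (expPoly n c (lam s)) s := by
    intro s hs
    refine (h.hasDerivAt hs).exp.congr_deriv ?_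
    rw [← mul_assoc, ← exp_add, add_neg_cancel, exp_zero, one_mul]
  have key := (convex_Ici (0 : ℝ)).mul_sub_le_image_sub_of_le_deriv (C := 1)
    (fun s hs => (hderiv s hs).continuousAt.continuousWithinAt)
    (fun s hs => (hderiv s (interior_subset hs)).differentiableAt.differentiableWithinAt)
    (fun s hs => (hderiv s (interior_subset hs)).deriv ▸
      h.one_le_expPoly hn hc0 hc (interior_subset hs)) 0 self_mem_Ici t ht ht
  simp only [h.map_zero, exp_zero, one_mul, sub_zero] at key
  linarith

theorem tendsto_atTop (h : SolvesExpPolyODE n c lam) (hn : 0 < n) (hc0 : c 0 = 1)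
    (hc : ∀ k, 0 ≤ c k) : Tendsto lam atTop atTop := by
  refine tendsto_atTop_mono' _ ?_
    (tendsto_log_atTop.comp (tendsto_atTop_add_const_left _ 1 tendsto_id))
  filter_upwards [eventually_ge_atTop 0] with t ht
  exact (log_le_iff_le_exp (by simp; linarith)).2 (h.one_add_le_exp hn hc0 hc ht)

/-- `λ'² = -(d/dt) expPolyTail n c (λ t)`, and `expPolyTail n c x → 0` as `x → ∞`. -/
theorem integrableOn_and_integral_sq_deriv (h : SolvesExpPolyODE n c lam) (hn : 0 < n)
    (hc0 : c 0 = 1) (hc : ∀ k, 0 ≤ c k) {t : ℝ} (ht : 0 ≤ t) :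
    IntegrableOn (fun s => deriv lam s ^ 2) (Ici t) ∧
      ∫ s in Ici t, deriv lam s ^ 2 = expPolyTail n c (lam t) := by
  have hderiv : ∀ s ∈ Ici t,
      HasDerivAt (fun s => -expPolyTail n c (lam s)) (deriv lam s ^ 2) s := by
    intro s hs
    have hs0 : 0 ≤ s := ht.trans hs
    refine ((hasDerivAt_expPolyTail n c (lam s)).comp s (h.hasDerivAt hs0)).neg.congr_deriv ?_
    rw [h.deriv_eq s hs0]
    ring
  have hlim : Tendsto (fun s => -expPolyTail n c (lam s)) atTop (𝓝 0) := by
    simpa using ((tendsto_expPolyTail_atTop n c).comp (h.tendsto_atTop hn hc0 hc)).neg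
  have hpos : ∀ s ∈ Ioi t, 0 ≤ deriv lam s ^ 2 := fun s _ => sq_nonneg _
  refine ⟨(integrableOn_Ici_iff_integrableOn_Ioi).2
    (integrableOn_Ioi_deriv_of_nonneg' hderiv hpos hlim), ?_⟩
  rw [integral_Ici_eq_integral_Ioi, integral_Ioi_of_hasDerivAt_of_nonneg' hderiv hpos hlim]
  ring

theorem hasDerivAt_exp_div_expPoly (h : SolvesExpPolyODE n c lam) (hn : 0 < n) (hc0 : c 0 = 1)
    (hc : ∀ k, 0 ≤ c k) {t : ℝ} (ht : 0 ≤ t) :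
    HasDerivAt (fun s => exp (lam s) / expPoly n c (lam s))
      (1 - expPoly (n - 1) (fun k => c (k + 1)) (lam t) / expPoly n c (lam t)) t := by
  have hg : expPoly n c (lam t) ≠ 0 := (zero_lt_one.trans_le (h.one_le_expPoly hn hc0 hc ht)).ne'
  refine ((h.hasDerivAt ht).exp.div
    ((hasDerivAt_expPoly n c (lam t)).comp t (h.hasDerivAt ht)) hg).congr_deriv ?_
  simp only [Function.comp_apply, exp_neg]
  field_simp

theorem exp_div_expPoly_le (h : SolvesExpPolyODE n c lam) (hn : 0 < n) (hc0 : c 0 = 1)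
    (hc : ∀ k, 0 ≤ c k) {t : ℝ} (ht : 0 ≤ t) :
    exp (lam t) / expPoly n c (lam t) ≤ 1 + t := by
  have hderiv := fun s (hs : s ∈ Ici (0 : ℝ)) => h.hasDerivAt_exp_div_expPoly hn hc0 hc hs
  have key := (convex_Ici (0 : ℝ)).image_sub_le_mul_sub_of_deriv_le (C := 1)
    (fun s hs => (hderiv s hs).continuousAt.continuousWithinAt)
    (fun s hs => (hderiv s (interior_subset hs)).differentiableAt.differentiableWithinAt)
    (fun s hs => by
      have hs0 := interior_subset (s := Ici (0 : ℝ)) hs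
      rw [(hderiv s hs0).deriv, sub_le_self_iff]
      exact div_nonneg (expPoly_nonneg _ (fun k => hc (k + 1)) (h.nonneg hn hc0 hs0))
        (zero_le_one.trans (h.one_le_expPoly hn hc0 hc hs0)))
    0 self_mem_Ici t ht ht
  simp only [h.map_zero, exp_zero, expPoly_apply_zero hn, hc0, div_one, one_mul, sub_zero] at key
  linarith

/-- Once `λ ≥ x₀`, the logarithmic derivative of `expPoly n c` at `λ` is at most `n / x₀`. -/
theorem mul_sub_le_exp_div_expPoly (h : SolvesExpPolyODE n c lam) (hn : 0 < n) (hc0 : c 0 = 1)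
    (hc : ∀ k, 0 ≤ c k) {x₀ T₀ t : ℝ} (hx₀ : 0 < x₀) (hT₀ : 0 ≤ T₀)
    (hlam : ∀ u, T₀ ≤ u → x₀ ≤ lam u) (ht : T₀ ≤ t) :
    (1 - n / x₀) * (t - T₀) ≤ exp (lam t) / expPoly n c (lam t) := by
  have hderiv := fun s (hs : s ∈ Ici T₀) =>
    h.hasDerivAt_exp_div_expPoly hn hc0 hc (hT₀.trans hs)
  have key := (convex_Ici T₀).mul_sub_le_image_sub_of_le_deriv (C := 1 - n / x₀)
    (fun s hs => (hderiv s hs).continuousAt.continuousWithinAt)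
    (fun s hs => (hderiv s (interior_subset hs)).differentiableAt.differentiableWithinAt)
    (fun s hs => by
      have hsT := interior_subset (s := Ici T₀) hs
      have hs0 : 0 ≤ s := hT₀.trans hsT
      have hx := hlam s hsT
      have hg := zero_lt_one.trans_le (h.one_le_expPoly hn hc0 hc hs0)
      rw [(hderiv s hsT).deriv, sub_le_sub_iff_left, div_le_div_iff₀ hg hx₀]
      calc expPoly (n - 1) (fun k => c (k + 1)) (lam s) * x₀
          ≤ lam s * expPoly (n - 1) (fun k => c (k + 1)) (lam s) := by
            rw [mul_comm]
            exact mul_le_mul_of_nonneg_right hx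
              (expPoly_nonneg _ (fun k => hc (k + 1)) (h.nonneg hn hc0 hs0))
        _ ≤ n * expPoly n c (lam s) := mul_expPoly_pred_le n hc (h.nonneg hn hc0 hs0))
    T₀ self_mem_Ici t ht ht
  have hψ : 0 ≤ exp (lam T₀) / expPoly n c (lam T₀) :=
    div_nonneg (exp_nonneg _) (zero_le_one.trans (h.one_le_expPoly hn hc0 hc hT₀))
  linarith

theorem inv_one_add_le_expPolyTail (h : SolvesExpPolyODE n c lam) (hn : 0 < n) (hc0 : c 0 = 1)
    (hc : ∀ k, 0 ≤ c k) {t : ℝ} (ht : 0 ≤ t) : (1 + t)⁻¹ ≤ expPolyTail n c (lam t) :=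
  calc (1 + t)⁻¹ ≤ (exp (lam t) / expPoly n c (lam t))⁻¹ :=
        inv_anti₀ (div_pos (exp_pos _) (zero_lt_one.trans_le (h.one_le_expPoly hn hc0 hc ht)))
          (h.exp_div_expPoly_le hn hc0 hc ht)
    _ = exp (-lam t) * expPoly n c (lam t) := (exp_neg_mul_eq_inv_exp_div _ _).symm
    _ ≤ expPolyTail n c (lam t) := exp_neg_mul_expPoly_le_expPolyTail n hc (h.nonneg hn hc0 ht)

theorem expPolyTail_le_div (h : SolvesExpPolyODE n c lam) (hn : 0 < n) (hc0 : c 0 = 1)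
    (hc : ∀ k, 0 ≤ c k) {x₀ t : ℝ} (hx₀ : n < x₀) (ht : exp x₀ < t) :
    expPolyTail n c (lam t) ≤ (1 + n ^ 2 / x₀) / (1 - n / x₀) / (t - exp x₀) := by
  have hx₀pos : 0 < x₀ := lt_of_le_of_lt (Nat.cast_nonneg n) hx₀
  have hlam : ∀ u, exp x₀ ≤ u → x₀ ≤ lam u := fun u hu =>
    exp_le_exp.1 (by linarith [h.one_add_le_exp hn hc0 hc ((exp_pos x₀).le.trans hu)])
  have ht0 : 0 ≤ t := (exp_pos x₀).le.trans ht.le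
  have hgap : 0 < (1 - n / x₀) * (t - exp x₀) :=
    mul_pos (by rw [sub_pos, div_lt_one hx₀pos]; exact hx₀) (by linarith)
  have hF : exp (-lam t) * expPoly n c (lam t) ≤ ((1 - n / x₀) * (t - exp x₀))⁻¹ := by
    rw [exp_neg_mul_eq_inv_exp_div]
    exact inv_anti₀ hgap (h.mul_sub_le_exp_div_expPoly hn hc0 hc hx₀pos (exp_pos x₀).le hlam ht.le)
  calc expPolyTail n c (lam t) ≤ (1 + n ^ 2 / lam t) * (exp (-lam t) * expPoly n c (lam t)) :=
        expPolyTail_le n hc (hx₀.le.trans (hlam t ht.le))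
    _ ≤ (1 + n ^ 2 / x₀) * ((1 - n / x₀) * (t - exp x₀))⁻¹ := by
        have := expPoly_nonneg n hc (h.nonneg hn hc0 ht0)
        gcongr
        exact hlam t ht.le
    _ = (1 + n ^ 2 / x₀) / (1 - n / x₀) / (t - exp x₀) := by rw [div_div, ← div_eq_mul_inv]

end SolvesExpPolyODE

theorem tendsto_div_add_const_atTop (a : ℝ) : Tendsto (fun t => t / (t + a)) atTop (𝓝 1) := by
  have h : Tendsto (fun t : ℝ => (1 + a * t⁻¹)⁻¹) atTop (𝓝 1) := by
    simpa using ((tendsto_inv_atTop_zero.const_mul a).const_add 1).inv₀ (by norm_num)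
  refine h.congr' ?_
  filter_upwards [eventually_gt_atTop 0] with t ht
  field_simp

theorem tendsto_one_add_div_div_one_sub_div_atTop (a b : ℝ) :
    Tendsto (fun x : ℝ => (1 + a / x) / (1 - b / x)) atTop (𝓝 1) := by
  have hdiv (d : ℝ) : Tendsto (fun x : ℝ => d / x) atTop (𝓝 0) :=
    tendsto_const_nhds.div_atTop tendsto_id
  simpa [Pi.div_def] using ((hdiv a).const_add 1).div ((hdiv b).const_sub 1) (by norm_num)

theorem exists_abs_mul_expPolyTail_sub_one_le {n : ℕ} (hn : 0 < n) {η : ℝ} (hη : 0 < η) :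
    ∃ T > 0, ∀ (c : ℕ → ℝ) (lam : ℝ → ℝ), c 0 = 1 → (∀ k, 0 ≤ c k) →
      SolvesExpPolyODE n c lam → ∀ t, T ≤ t → |t * expPolyTail n c (lam t) - 1| ≤ η := by
  obtain ⟨x₀, hK, hx₀⟩ := (((tendsto_one_add_div_div_one_sub_div_atTop (n ^ 2 : ℝ) n).eventually
    (gt_mem_nhds (lt_add_of_pos_right 1 hη))).and (eventually_gt_atTop (n : ℝ))).exists
  set K := (1 + n ^ 2 / x₀) / (1 - n / x₀)
  obtain ⟨T, hT⟩ := eventually_atTop.1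
    ((((tendsto_div_add_const_atTop 1).eventually (lt_mem_nhds (sub_lt_self 1 hη))).and
      (((tendsto_div_add_const_atTop (-exp x₀)).const_mul K).eventually
        (gt_mem_nhds (by simpa using hK)))).and (eventually_gt_atTop (exp x₀)))
  refine ⟨max T 1, by positivity, fun c lam hc0 hc h t ht => ?_⟩
  obtain ⟨⟨hlow, hup⟩, het⟩ := hT t (le_of_max_le_left ht)
  have ht0 : 0 ≤ t := (exp_pos x₀).le.trans het.le
  rw [abs_le]
  constructor
  · have := mul_le_mul_of_nonneg_left (h.inv_one_add_le_expPolyTail hn hc0 hc ht0) ht0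
    rw [← div_eq_mul_inv, add_comm] at this
    linarith
  · have := mul_le_mul_of_nonneg_left (h.expPolyTail_le_div hn hc0 hc hx₀ het) ht0
    rw [mul_div_left_comm] at this
    rw [← sub_eq_add_neg] at hup
    linarith

theorem tailS_one {Δ : ℕ} (hΔ : 1 ≤ Δ) (p : ℕ → ℝ) :
    tailS Δ p 1 = p 1 + ∑ k ∈ Finset.Icc 2 Δ, p k := by
  rw [tailS, ← Finset.add_sum_Ioc_eq_sum_Icc hΔ]
  rfl

/-- Uniform tail asymptotics: `∫_t^∞ (λ_p'(s))² ds ~ 1/t` uniformly in the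
degree-constraint distribution `p`. -/
theorem tail_integral_asymptotics (Δ : ℕ) (hΔ : 3 ≤ Δ) :
    ∀ η : ℝ, 0 < η → ∃ T : ℝ, 0 < T ∧
      ∀ p : ℕ → ℝ, (∀ k, 0 ≤ p k) → (∀ k, k < 2 → p k = 0) → (∀ k, Δ < k → p k = 0) →
        (∑ k ∈ Finset.Icc 2 Δ, p k) = 1 →
        ∀ lamp : ℝ → ℝ, Differentiable ℝ lamp → lamp 0 = 0 →
          (∀ t : ℝ, 0 ≤ t → deriv lamp t =
            Real.exp (-lamp t) *
              ∑ k ∈ Finset.range Δ, lamp t ^ k / (Nat.factorial k : ℝ) * tailS Δ p (k + 1)) →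
          ∀ t : ℝ, T ≤ t →
            MeasureTheory.IntegrableOn (fun s => (deriv lamp s) ^ 2) (Set.Ici t) ∧
            |t * (∫ s in Set.Ici t, (deriv lamp s) ^ 2) - 1| ≤ η := by
  intro η hη
  obtain ⟨T, hT, hasymp⟩ := exists_abs_mul_expPolyTail_sub_one_le (n := Δ) (by omega) hη
  refine ⟨T, hT, fun p hp hp01 _ hpsum lamp hdiff h0 hode t ht => ?_⟩
  set c : ℕ → ℝ := fun k => tailS Δ p (k + 1)
  have hc0 : c 0 = 1 := by simp [c, tailS_one (by omega : 1 ≤ Δ), hp01 1 one_lt_two, hpsum]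
  have hc : ∀ k, 0 ≤ c k := fun k => Finset.sum_nonneg fun d _ => hp d
  have h : SolvesExpPolyODE Δ c lamp := ⟨hdiff, h0, hode⟩
  obtain ⟨hint, heq⟩ := h.integrableOn_and_integral_sq_deriv (by omega) hc0 hc (hT.le.trans ht)
  exact ⟨hint, heq ▸ hasymp c lamp hc0 hc h t ht⟩
end
end

section
/- Bounds on the 2-regular solution λ (Claim 'Bounds on λ(t)', first part): For all t ≥ 0 one has log(t+1) ≤ λ(t) ≤ 2·log(2t+1) and λ'(t) ≥ 1/(t+1). -/
/-!
Along the solution `(e^λ)' = 1 + λ`, and each bound compares two functions that agree at `0` and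
have ordered derivatives: `λ e^λ` has derivative `(1 + λ)² ≥ 0`, whence `λ ≥ 0`; then `e^λ`
outgrows `t + 1`, while `e^{λ/2}`, with derivative `(1 + λ) / (2 e^{λ/2}) ≤ 1`, does not.
Finally `(t + 1)(1 + λ) - e^λ` has derivative `(t + 1) λ' ≥ 0`, and `e^λ ≤ (t + 1)(1 + λ)` is
`λ' ≥ 1 / (t + 1)`.
-/

open Real MeasureTheory Filter

noncomputable section

theorem le_of_hasDerivAt_le {f g f' g' : ℝ → ℝ} {a b : ℝ}
    (hf : ∀ x, a ≤ x → HasDerivAt f (f' x) x) (hg : ∀ x, a ≤ x → HasDerivAt g (g' x) x)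
    (hfg' : ∀ x, a < x → f' x ≤ g' x) (ha : f a ≤ g a) (hab : a ≤ b) : f b ≤ g b := by
  have hdiff : ∀ x, a ≤ x → HasDerivAt (fun x => g x - f x) (g' x - f' x) x :=
    fun x hx => (hg x hx).sub (hf x hx)
  have hmono : MonotoneOn (fun x => g x - f x) (Set.Ici a) := by
    refine monotoneOn_of_hasDerivWithinAt_nonneg (f' := fun x => g' x - f' x) (convex_Ici a)
      (fun x hx => (hdiff x hx).continuousAt.continuousWithinAt) (fun x hx => ?_) (fun x hx => ?_)
    · rw [interior_Ici] at hx ⊢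
      exact (hdiff x (le_of_lt hx)).hasDerivWithinAt
    · rw [interior_Ici] at hx
      exact sub_nonneg.2 (hfg' x hx)
  have := hmono Set.self_mem_Ici hab hab
  simp only at this
  linarith

def SolvesLambdaODE (lam : ℝ → ℝ) : Prop :=
  ∀ t, 0 ≤ t → HasDerivAt lam (exp (-lam t) * (1 + lam t)) t

namespace SolvesLambdaODE

variable {lam : ℝ → ℝ} {t : ℝ}

theorem hasDerivAt_exp (hlam : SolvesLambdaODE lam) (ht : 0 ≤ t) :
    HasDerivAt (fun s => exp (lam s)) (1 + lam t) t := by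
  convert (hlam t ht).exp using 1
  rw [exp_neg]
  field_simp

theorem nonneg (hlam : SolvesLambdaODE lam) (h0 : lam 0 = 0) (ht : 0 ≤ t) : 0 ≤ lam t := by
  have hderiv : ∀ s, 0 ≤ s → HasDerivAt (fun s => lam s * exp (lam s)) ((1 + lam s) ^ 2) s := by
    intro s hs
    refine ((hlam s hs).mul (hlam.hasDerivAt_exp hs)).congr_deriv ?_
    rw [exp_neg]
    field_simp
  have key := le_of_hasDerivAt_le (fun s _ => hasDerivAt_const s (0 : ℝ)) hderiv
    (fun s _ => sq_nonneg _) (by simp [h0]) ht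
  exact nonneg_of_mul_nonneg_left key (exp_pos _)

theorem add_one_le_exp (hlam : SolvesLambdaODE lam) (h0 : lam 0 = 0) (ht : 0 ≤ t) :
    t + 1 ≤ exp (lam t) :=
  le_of_hasDerivAt_le (fun s _ => (hasDerivAt_id s).add_const 1)
    (fun s hs => hlam.hasDerivAt_exp hs)
    (fun s hs => le_add_of_nonneg_right (hlam.nonneg h0 hs.le)) (by simp [h0]) ht

theorem exp_half_le_add_one (hlam : SolvesLambdaODE lam) (h0 : lam 0 = 0) (ht : 0 ≤ t) :
    exp (lam t / 2) ≤ t + 1 := by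
  have hderiv : ∀ s, 0 ≤ s →
      HasDerivAt (fun s => exp (lam s / 2)) ((1 + lam s) / (2 * exp (lam s / 2))) s := by
    intro s hs
    convert ((hlam s hs).div_const 2).exp using 1
    have hsplit : exp (lam s) = exp (lam s / 2) * exp (lam s / 2) := by
      rw [← exp_add, add_halves]
    rw [exp_neg, hsplit]
    field_simp
  refine le_of_hasDerivAt_le hderiv (fun s _ => (hasDerivAt_id s).add_const 1) (fun s _ => ?_)
    (by simp [h0]) ht
  rw [div_le_one (by positivity)]
  linarith [Real.add_one_le_exp (lam s / 2)]

theorem exp_le_mul (hlam : SolvesLambdaODE lam) (h0 : lam 0 = 0) (ht : 0 ≤ t) :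
    exp (lam t) ≤ (t + 1) * (1 + lam t) := by
  have hderiv : ∀ s, 0 ≤ s → HasDerivAt (fun s => (s + 1) * (1 + lam s))
      (1 * (1 + lam s) + (s + 1) * (exp (-lam s) * (1 + lam s))) s :=
    fun s hs => ((hasDerivAt_id s).add_const 1).mul ((hlam s hs).const_add 1)
  refine le_of_hasDerivAt_le (fun s hs => hlam.hasDerivAt_exp hs) hderiv (fun s hs => ?_)
    (by simp [h0]) ht
  have : 0 ≤ 1 + lam s := by linarith [hlam.nonneg h0 hs.le]
  have : 0 ≤ (s + 1) * (exp (-lam s) * (1 + lam s)) := by positivity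
  linarith

theorem one_div_add_one_le (hlam : SolvesLambdaODE lam) (h0 : lam 0 = 0) (ht : 0 ≤ t) :
    1 / (t + 1) ≤ exp (-lam t) * (1 + lam t) := by
  rw [exp_neg, div_le_iff₀ (by linarith), inv_mul_eq_div, div_mul_eq_mul_div,
    le_div_iff₀ (exp_pos _)]
  linarith [hlam.exp_le_mul h0 ht]

end SolvesLambdaODE

/-- Bounds on the 2-regular solution `λ`:
`log(t+1) ≤ λ(t) ≤ 2 log(2t+1)` and `λ'(t) ≥ 1/(t+1)` for all `t ≥ 0`. -/
theorem lambda_bounds (lam : ℝ → ℝ) (hdiff : Differentiable ℝ lam) (h0 : lam 0 = 0)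
    (hode : ∀ t : ℝ, 0 ≤ t → deriv lam t = Real.exp (-lam t) * (1 + lam t)) :
    ∀ t : ℝ, 0 ≤ t →
      Real.log (t + 1) ≤ lam t ∧ lam t ≤ 2 * Real.log (2 * t + 1) ∧
        1 / (t + 1) ≤ deriv lam t := by
  have hlam : SolvesLambdaODE lam := fun t ht => hode t ht ▸ (hdiff t).hasDerivAt
  intro t ht
  refine ⟨(log_le_iff_le_exp (by linarith)).2 (hlam.add_one_le_exp h0 ht), ?_,
    hode t ht ▸ hlam.one_div_add_one_le h0 ht⟩
  calc lam t = 2 * log (exp (lam t / 2)) := by rw [log_exp]; ring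
    _ ≤ 2 * log (t + 1) := by gcongr; exact hlam.exp_half_le_add_one h0 ht
    _ ≤ 2 * log (2 * t + 1) := by gcongr; linarith
end
end

section
/- Squeeze for λ_p (Lemma 'Bounds on λ_p'): Fix an integer Δ ≥ 3. For every δ ∈ (0,1) there exists ε₀ ∈ (0,1) such that for every ε ∈ (0,ε₀), every r ∈ R_Δ, with p = p(ε,r) and λ_p the solution of the corresponding initial value problem: for all t ∈ [0, 2/(ε·Υ_r)] one has λ(t) + (1−δ)·ε·Λ_r(t) ≤ λ_p(t) ≤ λ(t) + (1+δ)·ε·Λ_r(t). -/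
/-!
Separating variables turns both initial value problems into integral identities,
`∫₀^λ(t) eˣ/(1+x) dx = t = ∫₀^λₚ(t) eˣ/(1+x+εS(x)) dx` with `S(x) = Σ_{k=2}^{Δ-1} xᵏ/k! s_{k+1}`,
and `S ≥ 0` on `[0, ∞)`. Hence `λ ≤ λₚ`, and
`∫_λ^λₚ eˣ/(1+x) dx = ∫₀^λₚ (eˣ/(1+x) - eˣ/(1+x+εS(x))) dx`.
Up to factors `1 + O(η)`, with `η = ε · max_{[0,λₚ]} S · (1+λₚ)²`, the left side is
`(λₚ - λ) e^λ / (1+λ)` and the right side is `ε ∫₀^λ eˣ S(x)/(1+x)² dx = ε e^λ Λ_r / (1+λ)`;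
this gives the squeeze as soon as `η ≤ δ/16`. For `t ≤ 2/(εΥ_r) ≤ 2/(3ε)` the identity for `λₚ`
also yields `e^λₚ ≤ (3Δ/ε)(1+λₚ)^Δ`, so `η = O(√ε)` with a constant depending only on `Δ`.
-/

open Real MeasureTheory Filter

noncomputable section

theorem nonneg_of_deriv_pos_of_eq_zero {f : ℝ → ℝ} (hf : Differentiable ℝ f) (h0 : f 0 = 0)
    (hd : ∀ t, 0 ≤ t → f t = 0 → 0 < deriv f t) {t : ℝ} (ht : 0 ≤ t) : 0 ≤ f t := by
  have key := image_le_of_deriv_right_lt_deriv_boundary' (f := fun s => -f s)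
    (f' := fun s => -deriv f s) (B := fun _ => 0) (B' := fun _ => 0) hf.continuous.neg.continuousOn
    (fun s _ => (hf s).hasDerivAt.neg.hasDerivWithinAt) (by simp [h0]) continuousOn_const
    (fun _ _ => hasDerivWithinAt_const _ _ _)
    (fun s hs hfs => neg_neg_of_pos (hd s hs.1 (neg_eq_zero.mp hfs))) ⟨ht, le_rfl⟩
  simpa using key

theorem integral_inv_eq_of_deriv_eq_comp {ψ f : ℝ → ℝ} {s : Set ℝ} (hψ : ContinuousOn ψ s)
    (hψ0 : ∀ x ∈ s, ψ x ≠ 0) (hf : Differentiable ℝ f) (hfs : ∀ t, 0 ≤ t → f t ∈ s)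
    (hode : ∀ t, 0 ≤ t → deriv f t = ψ (f t)) {t : ℝ} (ht : 0 ≤ t) :
    ∫ x in f 0..f t, (ψ x)⁻¹ = t := by
  have hmaps : Set.MapsTo f (Set.uIcc 0 t) s := fun x hx =>
    hfs x (by rw [Set.uIcc_of_le ht] at hx; exact hx.1)
  have hderiv : Set.EqOn (deriv f) (ψ ∘ f) (Set.uIcc 0 t) := fun x hx =>
    hode x (by rw [Set.uIcc_of_le ht] at hx; exact hx.1)
  rw [← intervalIntegral.integral_comp_mul_deriv' (g := fun x => (ψ x)⁻¹)
    (fun x _ => (hf x).hasDerivAt) ((hψ.comp hf.continuous.continuousOn hmaps).congr hderiv)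
    ((hψ.inv₀ hψ0).mono (Set.image_subset_iff.mpr hmaps))]
  calc ∫ x in (0:ℝ)..t, ((fun x => (ψ x)⁻¹) ∘ f) x * deriv f x = ∫ _ in (0:ℝ)..t, (1:ℝ) :=
        intervalIntegral.integral_congr fun x hx => by
          simp [hderiv hx, inv_mul_cancel₀ (hψ0 _ (hmaps hx))]
    _ = t := by simp

section ExpODE

variable {S f : ℝ → ℝ} (hS0 : ∀ x, 0 ≤ x → 0 ≤ S x) (hf : Differentiable ℝ f) (h0 : f 0 = 0)
  (hode : ∀ t, 0 ≤ t → deriv f t = exp (-f t) * (1 + f t + S (f t)))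
include hS0 hf h0 hode

theorem nonneg_of_deriv_eq_exp_neg_mul {t : ℝ} (ht : 0 ≤ t) : 0 ≤ f t :=
  nonneg_of_deriv_pos_of_eq_zero hf h0 (fun s hs hfs => by
    rw [hode s hs, hfs]; have := hS0 0 le_rfl; positivity) ht

theorem integral_exp_div_eq_of_deriv_eq_exp_neg_mul (hS : ContinuousOn S (Set.Ici 0)) {t : ℝ}
    (ht : 0 ≤ t) : ∫ x in (0:ℝ)..f t, exp x / (1 + x + S x) = t := by
  have hpos : ∀ x ∈ Set.Ici (0:ℝ), 0 < 1 + x + S x := fun x hx => by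
    have := hS0 x hx; have : (0:ℝ) ≤ x := hx; linarith
  have key := integral_inv_eq_of_deriv_eq_comp (ψ := fun x => exp (-x) * (1 + x + S x))
    (s := Set.Ici 0) (by fun_prop) (fun x hx => (mul_pos (exp_pos _) (hpos x hx)).ne') hf
    (fun s hs => nonneg_of_deriv_eq_exp_neg_mul hS0 hf h0 hode hs) hode ht
  rw [h0] at key
  simpa [exp_neg, div_eq_mul_inv, mul_comm] using key

end ExpODE

theorem intervalIntegrable_of_continuousOn_Ici {f : ℝ → ℝ} {c u v : ℝ}
    (hf : ContinuousOn f (Set.Ici c)) (hu : c ≤ u) (hv : c ≤ v) :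
    IntervalIntegrable f volume u v :=
  (hf.mono fun _ hx => le_trans (le_min hu hv) hx.1).intervalIntegrable

theorem continuousOn_exp_div_one_add :
    ContinuousOn (fun x => exp x / (1 + x)) (Set.Ici 0) :=
  continuousOn_exp.div (by fun_prop) fun x (hx : 0 ≤ x) => by positivity

section IntegralBounds

variable {a b : ℝ} (ha : 0 ≤ a) (hab : a ≤ b)
include ha hab

theorem integral_exp_div_one_add_bounds :
    (b - a) * exp a ≤ (1 + b) * ∫ x in a..b, exp x / (1 + x) ∧
    (1 + a) * ∫ x in a..b, exp x / (1 + x) ≤ (b - a) * exp b ∧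
    exp b - exp a ≤ (1 + b) * ∫ x in a..b, exp x / (1 + x) := by
  have hint := intervalIntegrable_of_continuousOn_Ici continuousOn_exp_div_one_add ha (ha.trans hab)
  have hpos : ∀ x ∈ Set.Icc a b, 0 < 1 + x := fun x hx => by linarith [hx.1]
  refine ⟨?_, ?_, ?_⟩
  · have := intervalIntegral.integral_mono_on hab intervalIntegrable_const hint
      fun x hx => div_le_div₀ (exp_pos x).le (exp_le_exp.mpr hx.1) (hpos x hx)
        (by linarith [hx.2] : 1 + x ≤ 1 + b)
    rw [intervalIntegral.integral_const, smul_eq_mul] at this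
    calc (b - a) * exp a = (1 + b) * ((b - a) * (exp a / (1 + b))) := by
          field_simp [(by linarith : (1 + b) ≠ 0)]
      _ ≤ _ := by gcongr; linarith
  · have := intervalIntegral.integral_mono_on hab hint intervalIntegrable_const
      fun x hx => div_le_div₀ (exp_pos b).le (exp_le_exp.mpr hx.2) (by linarith)
        (by linarith [hx.1] : 1 + a ≤ 1 + x)
    rw [intervalIntegral.integral_const, smul_eq_mul] at this
    rwa [← le_div_iff₀' (by linarith), mul_div_assoc]
  · have := intervalIntegral.integral_mono_on hab
      ((continuous_exp.intervalIntegrable a b).div_const (1 + b)) hint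
      fun x hx => div_le_div_of_nonneg_left (exp_pos x).le (hpos x hx)
        (by linarith [hx.2] : 1 + x ≤ 1 + b)
    rw [intervalIntegral.integral_div, integral_exp, div_le_iff₀' (by linarith)] at this
    exact this

end IntegralBounds

theorem sub_one_le_integral_exp_div_pow (n : ℕ) {b : ℝ} (hb : 0 ≤ b) :
    exp b / (1 + b) ^ n - 1 ≤ ∫ x in 0..b, exp x / (1 + x) ^ n := by
  have hcont : ContinuousOn (fun x => exp x / (1 + x) ^ n) (Set.Icc 0 b) :=
    continuousOn_exp.div (by fun_prop) fun x hx => (pow_pos (by linarith [hx.1]) n).ne'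
  have key := intervalIntegral.sub_le_integral_of_hasDeriv_right_of_le hb hcont
    (g' := fun x => (exp x * (1 + x) ^ n - exp x * (n * (1 + x) ^ (n - 1))) / ((1 + x) ^ n) ^ 2)
    (fun x hx => by
      have hpow : HasDerivAt (fun y => (1 + y) ^ n) (n * (1 + x) ^ (n - 1)) x := by
        simpa [Function.comp_def] using
          (hasDerivAt_pow n (1 + x)).comp x ((hasDerivAt_id x).const_add 1)
      exact ((hasDerivAt_exp x).div hpow (pow_pos (by linarith [hx.1]) n).ne').hasDerivWithinAt)
    hcont.integrableOn_Icc
    (fun x hx => by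
      have hx0 : 0 < 1 + x := by linarith [hx.1]
      calc (exp x * (1 + x) ^ n - exp x * (n * (1 + x) ^ (n - 1))) / ((1 + x) ^ n) ^ 2
          ≤ exp x * (1 + x) ^ n / ((1 + x) ^ n) ^ 2 := by
            gcongr; exact sub_le_self _ (by positivity)
        _ = exp x / (1 + x) ^ n := by field_simp)
  simpa using key


section PerturbationAlgebra

variable {ε M δ η a b I Ga Gb : ℝ}

theorem sub_le_and_exp_le_of_exp_sub_le (hη0 : 0 ≤ η) (hη : η ≤ 1 / 2)
    (h : exp b - exp a ≤ η * exp b) : b - a ≤ 2 * η ∧ exp b ≤ 2 * exp a := by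
  have hb : exp b = exp a * exp (b - a) := by rw [← exp_add]; ring_nf
  have hE : exp (b - a) - 1 ≤ η * exp (b - a) := by
    rw [hb] at h
    exact le_of_mul_le_mul_left (by linarith) (exp_pos a)
  have hE2 : exp (b - a) ≤ 2 := by nlinarith [exp_pos (b - a)]
  constructor
  · nlinarith [add_one_le_exp (b - a)]
  · rw [hb]; nlinarith [exp_pos a]

variable (hδ1 : δ < 1) (hη0 : 0 ≤ η) (hηδ : η ≤ δ / 16) (hab : a ≤ b) (hD : b - a ≤ 2 * η)
  (ha : 0 ≤ a)
include hδ1 hη0 hηδ hab hD ha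

theorem sub_mul_exp_le_of_integral_bounds (hε : 0 ≤ ε) (hM : 0 ≤ M) (hGa : 0 ≤ Ga)
    (hGb : 0 ≤ Gb) (hεM : ε * M * (1 + b) ≤ η) (heb : exp b ≤ 2 * exp a) (hI : I ≤ ε * Gb)
    (hIa : (b - a) * exp a ≤ (1 + b) * I) (hGab : Gb - Ga ≤ (b - a) * exp b * M) :
    (b - a) * exp a ≤ (1 + δ) * ε * ((1 + a) * Ga) := by
  have hIa' : (b - a) * exp a ≤ (1 + b) * (ε * Gb) :=
    hIa.trans (mul_le_mul_of_nonneg_left hI (by linarith))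
  have hGb_le : Gb - Ga ≤ 2 * η * Gb :=
    calc Gb - Ga ≤ (b - a) * exp b * M := hGab
      _ ≤ (b - a) * (2 * exp a) * M := by gcongr
      _ = 2 * ((b - a) * exp a) * M := by ring
      _ ≤ 2 * ((1 + b) * (ε * Gb)) * M := by gcongr
      _ = 2 * (ε * M * (1 + b)) * Gb := by ring
      _ ≤ 2 * η * Gb := by gcongr
  have hGb_Ga : Gb ≤ (1 + 4 * η) * Ga := by
    nlinarith [mul_le_mul_of_nonneg_left hGb_le (by linarith : (0:ℝ) ≤ 1 + 4 * η),
      mul_nonneg (mul_nonneg hη0 (by linarith : (0:ℝ) ≤ 1 - 4 * η)) hGb]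
  have hL : 1 + b ≤ (1 + a) * (1 + 2 * η) := by nlinarith
  have hδ : (1 + 2 * η) * (1 + 4 * η) ≤ 1 + δ := by nlinarith
  calc (b - a) * exp a ≤ (1 + b) * (ε * Gb) := hIa'
    _ ≤ ((1 + a) * (1 + 2 * η)) * (ε * ((1 + 4 * η) * Ga)) := by gcongr
    _ = (1 + 2 * η) * (1 + 4 * η) * (ε * ((1 + a) * Ga)) := by ring
    _ ≤ (1 + δ) * (ε * ((1 + a) * Ga)) := by gcongr
    _ = (1 + δ) * ε * ((1 + a) * Ga) := by ring

theorem le_sub_mul_exp_of_integral_bounds (hI0 : 0 ≤ I) (hεM : ε * M ≤ η)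
    (hI : ε * Ga ≤ (1 + ε * M) * I) (hIb : (1 + a) * I ≤ (b - a) * exp b) :
    (1 - δ) * ε * ((1 + a) * Ga) ≤ (b - a) * exp a := by
  have hexp : (1 - (b - a)) * exp b ≤ exp a := by
    have h := add_one_le_exp (-(b - a))
    have : exp a = exp (-(b - a)) * exp b := by rw [← exp_add]; ring_nf
    rw [this]; nlinarith [exp_pos b]
  have hεGa : ε * Ga ≤ (1 + η) * I := hI.trans (by gcongr)
  have hδ : (1 - δ) * (1 + η) ≤ 1 - (b - a) := by nlinarith
  calc (1 - δ) * ε * ((1 + a) * Ga) = (1 - δ) * (1 + a) * (ε * Ga) := by ring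
    _ ≤ (1 - δ) * (1 + a) * ((1 + η) * I) := by gcongr
    _ = (1 - δ) * (1 + η) * ((1 + a) * I) := by ring
    _ ≤ (1 - (b - a)) * ((1 + a) * I) := by gcongr
    _ ≤ (1 - (b - a)) * ((b - a) * exp b) := by gcongr; linarith
    _ = (b - a) * ((1 - (b - a)) * exp b) := by ring
    _ ≤ (b - a) * exp a := by gcongr

end PerturbationAlgebra

section Perturbation

variable {S : ℝ → ℝ} {ε M : ℝ} (hS : ContinuousOn S (Set.Ici 0))
  (hS0 : ∀ x, 0 ≤ x → 0 ≤ S x)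

include hS in
theorem continuousOn_exp_div_sq_mul :
    ContinuousOn (fun x => exp x / (1 + x) ^ 2 * S x) (Set.Ici 0) :=
  (continuousOn_exp.div (by fun_prop) fun x (hx : 0 ≤ x) => by positivity).mul hS

include hS hS0 in
theorem continuousOn_exp_div_add_mul (hε : 0 ≤ ε) :
    ContinuousOn (fun x => exp x / (1 + x + ε * S x)) (Set.Ici 0) :=
  continuousOn_exp.div (by fun_prop) fun x (hx : 0 ≤ x) => by
    have := mul_nonneg hε (hS0 x hx); positivity

include hS hS0 in
theorem integral_exp_div_sq_mul_le {u v b : ℝ} (hSM : ∀ x, 0 ≤ x → x ≤ b → S x ≤ M)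
    (hu : 0 ≤ u) (huv : u ≤ v) (hvb : v ≤ b) :
    ∫ x in u..v, exp x / (1 + x) ^ 2 * S x ≤ (v - u) * exp b * M := by
  have := intervalIntegral.integral_mono_on huv
    (intervalIntegrable_of_continuousOn_Ici (continuousOn_exp_div_sq_mul hS) hu (hu.trans huv))
    intervalIntegrable_const fun x hx => by
      have hx0 : 0 ≤ x := hu.trans hx.1
      have hSx := hS0 x hx0
      calc exp x / (1 + x) ^ 2 * S x ≤ exp x * S x := by
            gcongr; exact div_le_self (exp_pos x).le (one_le_pow₀ (by linarith))
        _ ≤ exp b * M := by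
            gcongr
            · exact hx.2.trans hvb
            · exact hSM x hx0 (hx.2.trans hvb)
  rwa [intervalIntegral.integral_const, smul_eq_mul, ← mul_assoc] at this

theorem exp_div_sub_exp_div_eq {x s : ℝ} (hx : 0 < 1 + x) (hs : 0 < 1 + x + ε * s) :
    exp x / (1 + x) - exp x / (1 + x + ε * s) =
      ε * (exp x / (1 + x) ^ 2 * s) * ((1 + x) / (1 + x + ε * s)) := by
  field_simp
  ring

theorem exp_div_sub_exp_div_nonneg_and_le {x s : ℝ} (hε : 0 ≤ ε) (hx : 0 ≤ x) (hs : 0 ≤ s) :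
    0 ≤ exp x / (1 + x) - exp x / (1 + x + ε * s) ∧
    exp x / (1 + x) - exp x / (1 + x + ε * s) ≤ ε * (exp x / (1 + x) ^ 2 * s) := by
  have h2 : 0 < 1 + x + ε * s := by have := mul_nonneg hε hs; linarith
  rw [exp_div_sub_exp_div_eq (by linarith) h2]
  exact ⟨by positivity,
    mul_le_of_le_one_right (by positivity) ((div_le_one h2).mpr (by nlinarith))⟩

theorem mul_exp_div_sq_mul_le {x s : ℝ} (hε : 0 ≤ ε) (hx : 0 ≤ x) (hs : 0 ≤ s) (hsM : s ≤ M) :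
    ε * (exp x / (1 + x) ^ 2 * s) ≤
      (1 + ε * M) * (exp x / (1 + x) - exp x / (1 + x + ε * s)) := by
  have h2 : 0 < 1 + x + ε * s := by have := mul_nonneg hε hs; linarith
  have hq : 1 ≤ (1 + ε * M) * ((1 + x) / (1 + x + ε * s)) := by
    rw [mul_div_assoc', one_le_div h2]
    nlinarith [mul_le_mul_of_nonneg_left hsM hε, mul_nonneg (mul_nonneg hε (hs.trans hsM)) hx]
  rw [exp_div_sub_exp_div_eq (by linarith) h2]
  calc ε * (exp x / (1 + x) ^ 2 * s) ≤
        ε * (exp x / (1 + x) ^ 2 * s) * ((1 + ε * M) * ((1 + x) / (1 + x + ε * s))) :=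
        le_mul_of_one_le_right (by positivity) hq
    _ = _ := by ring

variable (hε : 0 ≤ ε)
include hS hS0 hε

theorem integral_exp_div_sub_nonneg_and_le {b : ℝ} (hb : 0 ≤ b) :
    0 ≤ ∫ x in 0..b, (exp x / (1 + x) - exp x / (1 + x + ε * S x)) ∧
    ∫ x in 0..b, (exp x / (1 + x) - exp x / (1 + x + ε * S x)) ≤
      ε * ∫ x in 0..b, exp x / (1 + x) ^ 2 * S x := by
  refine ⟨intervalIntegral.integral_nonneg hb fun x hx =>
    (exp_div_sub_exp_div_nonneg_and_le hε hx.1 (hS0 x hx.1)).1, ?_⟩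
  rw [← intervalIntegral.integral_const_mul]
  exact intervalIntegral.integral_mono_on hb
    ((intervalIntegrable_of_continuousOn_Ici continuousOn_exp_div_one_add le_rfl hb).sub
      (intervalIntegrable_of_continuousOn_Ici (continuousOn_exp_div_add_mul hS hS0 hε) le_rfl hb))
    ((intervalIntegrable_of_continuousOn_Ici (continuousOn_exp_div_sq_mul hS) le_rfl hb).const_mul
      ε) fun x hx => (exp_div_sub_exp_div_nonneg_and_le hε hx.1 (hS0 x hx.1)).2

theorem le_integral_exp_div_sub {a b : ℝ} (hSM : ∀ x, 0 ≤ x → x ≤ b → S x ≤ M) (ha : 0 ≤ a)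
    (hab : a ≤ b) :
    ε * ∫ x in 0..a, exp x / (1 + x) ^ 2 * S x ≤
      (1 + ε * M) * ∫ x in 0..b, (exp x / (1 + x) - exp x / (1 + x + ε * S x)) := by
  have hint : ∀ u v : ℝ, 0 ≤ u → 0 ≤ v →
      IntervalIntegrable (fun x => exp x / (1 + x) - exp x / (1 + x + ε * S x)) volume u v :=
    fun u v hu hv =>
      (intervalIntegrable_of_continuousOn_Ici continuousOn_exp_div_one_add hu hv).sub
        (intervalIntegrable_of_continuousOn_Ici (continuousOn_exp_div_add_mul hS hS0 hε) hu hv)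
  have hsplit := intervalIntegral.integral_add_adjacent_intervals (hint 0 a le_rfl ha)
    (hint a b ha (ha.trans hab))
  have htail : 0 ≤ ∫ x in a..b, (exp x / (1 + x) - exp x / (1 + x + ε * S x)) :=
    intervalIntegral.integral_nonneg hab fun x hx =>
      (exp_div_sub_exp_div_nonneg_and_le hε (ha.trans hx.1) (hS0 x (ha.trans hx.1))).1
  have hM : 0 ≤ 1 + ε * M := by
    have := mul_nonneg hε ((hS0 0 le_rfl).trans (hSM 0 le_rfl (ha.trans hab))); linarith
  rw [← hsplit, mul_add, ← intervalIntegral.integral_const_mul,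
    ← intervalIntegral.integral_const_mul]
  refine le_add_of_le_of_nonneg (intervalIntegral.integral_mono_on ha
    ((intervalIntegrable_of_continuousOn_Ici (continuousOn_exp_div_sq_mul hS) le_rfl ha).const_mul
      ε) ((hint 0 a le_rfl ha).const_mul _) fun x hx =>
      mul_exp_div_sq_mul_le hε hx.1 (hS0 x hx.1) (hSM x hx.1 (hx.2.trans hab)))
    (mul_nonneg hM htail)

theorem integral_exp_div_one_add_eq_of_integral_eq {a b : ℝ} (ha : 0 ≤ a) (hb : 0 ≤ b)
    (heq : ∫ x in 0..a, exp x / (1 + x) = ∫ x in 0..b, exp x / (1 + x + ε * S x)) :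
    ∫ x in a..b, exp x / (1 + x) =
      ∫ x in 0..b, (exp x / (1 + x) - exp x / (1 + x + ε * S x)) := by
  have hint := intervalIntegrable_of_continuousOn_Ici continuousOn_exp_div_one_add le_rfl hb
  rw [intervalIntegral.integral_sub hint
      (intervalIntegrable_of_continuousOn_Ici (continuousOn_exp_div_add_mul hS hS0 hε) le_rfl hb),
    ← heq, intervalIntegral.integral_interval_sub_left hint
      (intervalIntegrable_of_continuousOn_Ici continuousOn_exp_div_one_add le_rfl ha)]

theorem le_of_integral_eq {a b : ℝ} (ha : 0 ≤ a) (hb : 0 ≤ b)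
    (heq : ∫ x in 0..a, exp x / (1 + x) = ∫ x in 0..b, exp x / (1 + x + ε * S x)) : a ≤ b := by
  by_contra! h
  have hpos := intervalIntegral.intervalIntegral_pos_of_pos_on
    (intervalIntegrable_of_continuousOn_Ici continuousOn_exp_div_one_add hb ha)
    (fun x hx => div_pos (exp_pos x) (by linarith [hx.1])) h
  rw [intervalIntegral.integral_symm,
    integral_exp_div_one_add_eq_of_integral_eq hS hS0 hε ha hb heq] at hpos
  linarith [(integral_exp_div_sub_nonneg_and_le hS hS0 hε hb).1]

theorem sub_mul_exp_squeeze_of_integral_eq {δ a b : ℝ} (hSM : ∀ x, 0 ≤ x → x ≤ b → S x ≤ M)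
    (hδ1 : δ < 1) (ha : 0 ≤ a) (hb : 0 ≤ b) (hη : ε * M * (1 + b) ^ 2 ≤ δ / 16)
    (heq : ∫ x in 0..a, exp x / (1 + x) = ∫ x in 0..b, exp x / (1 + x + ε * S x)) :
    (1 - δ) * ε * ((1 + a) * ∫ x in 0..a, exp x / (1 + x) ^ 2 * S x) ≤ (b - a) * exp a ∧
    (b - a) * exp a ≤ (1 + δ) * ε * ((1 + a) * ∫ x in 0..a, exp x / (1 + x) ^ 2 * S x) := by
  have hab := le_of_integral_eq hS hS0 hε ha hb heq
  obtain ⟨hI0, hI_le⟩ := integral_exp_div_sub_nonneg_and_le hS hS0 hε hb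
  have hle_I := le_integral_exp_div_sub hS hS0 hε hSM ha hab
  rw [← integral_exp_div_one_add_eq_of_integral_eq hS hS0 hε ha hb heq] at hI0 hI_le hle_I
  obtain ⟨hIa, hIb, hIexp⟩ := integral_exp_div_one_add_bounds ha hab
  have hf3 : ∀ x ∈ Set.Icc (0:ℝ) b, 0 ≤ exp x / (1 + x) ^ 2 * S x := fun x hx => by
    have := hS0 x hx.1; positivity
  have hGa := intervalIntegral.integral_nonneg (μ := volume) ha fun x hx =>
    hf3 x ⟨hx.1, hx.2.trans hab⟩
  have hGb := intervalIntegral.integral_nonneg (μ := volume) hb hf3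
  have hGb_le := integral_exp_div_sq_mul_le hS hS0 hSM le_rfl hb le_rfl
  have hGab := integral_exp_div_sq_mul_le hS hS0 hSM ha hab le_rfl
  rw [← intervalIntegral.integral_interval_sub_left
    (intervalIntegrable_of_continuousOn_Ici (continuousOn_exp_div_sq_mul hS) le_rfl hb)
    (intervalIntegrable_of_continuousOn_Ici (continuousOn_exp_div_sq_mul hS) le_rfl ha)] at hGab
  have hM : 0 ≤ M := (hS0 0 le_rfl).trans (hSM 0 le_rfl hb)
  have hη0 : 0 ≤ ε * M * (1 + b) ^ 2 := by positivity
  have hcrude : exp b - exp a ≤ ε * M * (1 + b) ^ 2 * exp b :=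
    calc exp b - exp a ≤ (1 + b) * (ε * ((b - 0) * exp b * M)) :=
          hIexp.trans (mul_le_mul_of_nonneg_left
            (hI_le.trans (mul_le_mul_of_nonneg_left hGb_le hε)) (by linarith))
      _ ≤ ε * M * (1 + b) ^ 2 * exp b := by nlinarith [exp_pos b, mul_nonneg hε hM]
  obtain ⟨hD, heb⟩ := sub_le_and_exp_le_of_exp_sub_le hη0 (by linarith) hcrude
  have hL : 1 ≤ 1 + b := by linarith
  exact ⟨le_sub_mul_exp_of_integral_bounds hδ1 hη0 hη hab hD ha hI0
      (le_mul_of_one_le_right (by positivity) (one_le_pow₀ hL)) hle_I hIb,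
    sub_mul_exp_le_of_integral_bounds hδ1 hη0 hη hab hD ha hε hM hGa hGb
      (by rw [sq, ← mul_assoc]; exact le_mul_of_one_le_right (by positivity) hL) heb
      hI_le hIa hGab⟩

end Perturbation

theorem exp_div_pow_sub_one_le_integral {S : ℝ → ℝ} {c ε b : ℝ} {n : ℕ} (hn : 1 ≤ n) (hc : 1 ≤ c)
    (hε : 0 ≤ ε) (hε1 : ε ≤ 1) (hS : ContinuousOn S (Set.Ici 0)) (hS0 : ∀ x, 0 ≤ x → 0 ≤ S x)
    (hSc : ∀ x, 0 ≤ x → S x ≤ c * (1 + x) ^ n) (hb : 0 ≤ b) :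
    exp b / (1 + b) ^ n - 1 ≤ 2 * c * ∫ x in 0..b, exp x / (1 + x + ε * S x) := by
  rw [← intervalIntegral.integral_const_mul]
  refine (sub_one_le_integral_exp_div_pow n hb).trans (intervalIntegral.integral_mono_on hb
    (intervalIntegrable_of_continuousOn_Ici
      (continuousOn_exp.div (by fun_prop) fun x (hx : 0 ≤ x) => by positivity) le_rfl hb)
    ((intervalIntegrable_of_continuousOn_Ici (continuousOn_exp_div_add_mul hS hS0 hε) le_rfl hb
      ).const_mul _) fun x hx => ?_)
  have hx1 : 1 ≤ 1 + x := by linarith [hx.1]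
  have hden : 1 + x + ε * S x ≤ 2 * c * (1 + x) ^ n := by
    have := le_self_pow₀ hx1 (by omega : n ≠ 0)
    have := mul_le_of_le_one_left (hS0 x hx.1) hε1
    nlinarith [hSc x hx.1, one_le_pow₀ hx1 (n := n)]
  have hpos : 0 < 1 + x + ε * S x := by have := mul_nonneg hε (hS0 x hx.1); linarith
  rw [mul_div_assoc', le_div_iff₀ hpos, div_mul_eq_mul_div, div_le_iff₀ (by positivity)]
  nlinarith [exp_pos x]

theorem sq_mul_pow_le_of_exp_le {ε C b : ℝ} {m n : ℕ} (hε : 0 < ε) (hb : 0 ≤ b)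
    (h : exp b ≤ C / ε * (1 + b) ^ n) :
    (ε * (1 + b) ^ m) ^ 2 ≤ exp 1 * C * Nat.factorial (2 * m + n) * ε := by
  have hL := pow_div_factorial_le_exp (1 + b) (by linarith) (2 * m + n)
  rw [div_le_iff₀ (by positivity), exp_add] at hL
  have hLn : 0 < (1 + b) ^ n := by positivity
  refine le_of_mul_le_mul_right ?_ hLn
  calc (ε * (1 + b) ^ m) ^ 2 * (1 + b) ^ n = ε ^ 2 * (1 + b) ^ (2 * m + n) := by ring
    _ ≤ ε ^ 2 * (exp 1 * exp b * Nat.factorial (2 * m + n)) := by gcongr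
    _ ≤ ε ^ 2 * (exp 1 * (C / ε * (1 + b) ^ n) * Nat.factorial (2 * m + n)) := by gcongr
    _ = exp 1 * C * Nat.factorial (2 * m + n) * ε * (1 + b) ^ n := by field_simp

section TailPoly

def tailPoly (Δ : ℕ) (r : ℕ → ℝ) (x : ℝ) : ℝ :=
  ∑ k ∈ Finset.Icc 2 (Δ - 1), x ^ k / (Nat.factorial k : ℝ) * tailS Δ r (k + 1)

theorem continuous_tailPoly (Δ : ℕ) (r : ℕ → ℝ) : Continuous (tailPoly Δ r) := by
  unfold tailPoly
  fun_prop

variable {Δ : ℕ} {r : ℕ → ℝ} (hr : memR Δ r)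
include hr

theorem tailS_nonneg {k : ℕ} (hk : 3 ≤ k) : 0 ≤ tailS Δ r k :=
  Finset.sum_nonneg fun d hd => by
    rw [Finset.mem_Icc] at hd
    exact hr.2.1 d (hk.trans hd.1) hd.2

theorem tailS_le_one {k : ℕ} (hk : 3 ≤ k) : tailS Δ r k ≤ 1 := by
  rw [← hr.2.2.2]
  exact Finset.sum_le_sum_of_subset_of_nonneg (Finset.Icc_subset_Icc_left hk) fun i hi _ => by
    rw [Finset.mem_Icc] at hi
    exact hr.2.1 i hi.1 hi.2

theorem tailPoly_nonneg {x : ℝ} (hx : 0 ≤ x) : 0 ≤ tailPoly Δ r x :=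
  Finset.sum_nonneg fun k hk => by
    rw [Finset.mem_Icc] at hk
    have := tailS_nonneg hr (k := k + 1) (by omega)
    positivity

theorem tailPoly_le {x : ℝ} (hx : 0 ≤ x) : tailPoly Δ r x ≤ Δ * (1 + x) ^ Δ := by
  have hterm : ∀ k ∈ Finset.Icc 2 (Δ - 1),
      x ^ k / (Nat.factorial k : ℝ) * tailS Δ r (k + 1) ≤ (1 + x) ^ Δ := fun k hk => by
    rw [Finset.mem_Icc] at hk
    calc x ^ k / (Nat.factorial k : ℝ) * tailS Δ r (k + 1) ≤ x ^ k / 1 * 1 := by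
          gcongr
          · exact tailS_nonneg hr (by omega)
          · exact_mod_cast Nat.one_le_iff_ne_zero.mpr (Nat.factorial_ne_zero k)
          · exact tailS_le_one hr (by omega)
      _ ≤ (1 + x) ^ k := by rw [div_one, mul_one]; gcongr; linarith
      _ ≤ (1 + x) ^ Δ := pow_le_pow_right₀ (by linarith) (by omega)
  calc tailPoly Δ r x ≤ (Finset.Icc 2 (Δ - 1)).card • (1 + x) ^ Δ :=
        Finset.sum_le_card_nsmul _ _ _ hterm
    _ ≤ Δ * (1 + x) ^ Δ := by
        rw [nsmul_eq_mul, Nat.card_Icc]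
        gcongr
        exact_mod_cast (by omega : Δ - 1 + 1 - 2 ≤ Δ)

theorem three_le_upsilon : 3 ≤ Upsilon Δ r := by
  calc (3 : ℝ) = ∑ k ∈ Finset.Icc 3 Δ, 3 * r k := by rw [← Finset.mul_sum, hr.2.2.2, mul_one]
    _ ≤ Upsilon Δ r := Finset.sum_le_sum fun k hk => by
        rw [Finset.mem_Icc] at hk
        have hk3 : (3 : ℝ) ≤ k := by exact_mod_cast hk.1
        exact mul_le_mul_of_nonneg_right (by nlinarith) (hr.2.1 k hk.1 hk.2)

end TailPoly

theorem sq_eps_mul_pow_le_of_integral_le {Δ : ℕ} {r : ℕ → ℝ} {ε b : ℝ} (hr : memR Δ r)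
    (hΔ : 1 ≤ Δ) (hε : 0 < ε) (hε1 : ε ≤ 1) (hb : 0 ≤ b)
    (ht : ∫ x in 0..b, exp x / (1 + x + ε * tailPoly Δ r x) ≤ 2 / (ε * Upsilon Δ r)) :
    (ε * (1 + b) ^ (Δ + 2)) ^ 2 ≤ exp 1 * (3 * Δ) * Nat.factorial (3 * Δ + 4) * ε := by
  have hΔ1 : (1 : ℝ) ≤ Δ := by exact_mod_cast hΔ
  have hint := exp_div_pow_sub_one_le_integral hΔ hΔ1 hε.le hε1
    (continuous_tailPoly Δ r).continuousOn (fun x => tailPoly_nonneg hr)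
    (fun x => tailPoly_le hr) hb
  have hΥ : 2 / (ε * Upsilon Δ r) ≤ 2 / (3 * ε) :=
    div_le_div_of_nonneg_left (by norm_num) (by positivity) (by nlinarith [three_le_upsilon hr])
  have hexp : exp b ≤ 3 * Δ / ε * (1 + b) ^ Δ := by
    have hdiv : exp b / (1 + b) ^ Δ ≤ 3 * Δ / ε := by
      calc exp b / (1 + b) ^ Δ ≤ 1 + 2 * Δ * (2 / (3 * ε)) := by nlinarith
        _ = 1 + 4 / 3 * (Δ / ε) := by field_simp; ring
        _ ≤ 3 * Δ / ε := by
            have : 1 ≤ Δ / ε := by rw [le_div_iff₀ hε]; linarith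
            rw [mul_div_assoc]; linarith
    rwa [div_le_iff₀ (by positivity)] at hdiv
  have := sq_mul_pow_le_of_exp_le (m := Δ + 2) hε hb hexp
  rwa [show 2 * (Δ + 2) + Δ = 3 * Δ + 4 by ring] at this

-- `768 = 16² · 3` and `(3Δ+4)!` comes from `x ^ (3Δ+4) / (3Δ+4)! ≤ exp x`.
def squeezeConst (Δ : ℕ) : ℝ := 768 * exp 1 * Δ ^ 3 * Nat.factorial (3 * Δ + 4)

theorem one_le_squeezeConst {Δ : ℕ} (hΔ : 1 ≤ Δ) : 1 ≤ squeezeConst Δ :=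
  calc (1 : ℝ) = 1 * 1 * 1 * 1 := by ring
    _ ≤ squeezeConst Δ := by
        unfold squeezeConst
        gcongr
        · norm_num
        · exact one_le_exp zero_le_one
        · exact one_le_pow₀ (by exact_mod_cast hΔ)
        · exact_mod_cast Nat.one_le_iff_ne_zero.mpr (Nat.factorial_ne_zero _)

theorem eps_mul_pow_le_of_integral_le {Δ : ℕ} {r : ℕ → ℝ} {ε δ b : ℝ} (hr : memR Δ r)
    (hΔ : 1 ≤ Δ) (hδ : 0 < δ) (hε : 0 < ε) (hε1 : ε ≤ 1) (hεδ : ε ≤ δ ^ 2 / squeezeConst Δ)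
    (hb : 0 ≤ b)
    (ht : ∫ x in 0..b, exp x / (1 + x + ε * tailPoly Δ r x) ≤ 2 / (ε * Upsilon Δ r)) :
    ε * (Δ * (1 + b) ^ Δ) * (1 + b) ^ 2 ≤ δ / 16 := by
  have hΔ1 : (1 : ℝ) ≤ Δ := by exact_mod_cast hΔ
  have hsq : (Δ * (ε * (1 + b) ^ (Δ + 2))) ^ 2 ≤ (δ / 16) ^ 2 := by
    rw [mul_pow]
    calc (Δ : ℝ) ^ 2 * (ε * (1 + b) ^ (Δ + 2)) ^ 2
        ≤ Δ ^ 2 * (exp 1 * (3 * Δ) * Nat.factorial (3 * Δ + 4) * (δ ^ 2 / squeezeConst Δ)) := by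
          gcongr
          exact (sq_eps_mul_pow_le_of_integral_le hr hΔ hε hε1 hb ht).trans (by gcongr)
      _ = (δ / 16) ^ 2 := by unfold squeezeConst; field_simp; ring
  calc ε * (Δ * (1 + b) ^ Δ) * (1 + b) ^ 2 = Δ * (ε * (1 + b) ^ (Δ + 2)) := by ring
    _ ≤ δ / 16 := (pow_le_pow_iff_left₀ (by positivity) (by positivity) two_ne_zero).mp hsq

theorem lamErr_eq (lam : ℝ → ℝ) (Δ : ℕ) (r : ℕ → ℝ) (t : ℝ) :
    LamErr lam Δ r t =
      deriv lam t * ∫ x in 0..lam t, exp x / (1 + x) ^ 2 * tailPoly Δ r x := rfl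

theorem lamErr_mul_exp {lam : ℝ → ℝ} (Δ : ℕ) (r : ℕ → ℝ) {t : ℝ}
    (hode : deriv lam t = exp (-lam t) * (1 + lam t)) :
    LamErr lam Δ r t * exp (lam t) =
      (1 + lam t) * ∫ x in 0..lam t, exp x / (1 + x) ^ 2 * tailPoly Δ r x := by
  rw [lamErr_eq, hode, exp_neg, mul_comm, ← mul_assoc, mul_inv_cancel_left₀ (exp_pos _).ne']

/-- Squeeze for `λ_p`: for small `ε`, on `[0, 2/(ε Υ_r)]` one has
`λ + (1-δ) ε Λ_r ≤ λ_p ≤ λ + (1+δ) ε Λ_r`. -/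
theorem lambda_p_squeeze (Δ : ℕ) (hΔ : 3 ≤ Δ) (lam : ℝ → ℝ)
    (hdiff : Differentiable ℝ lam) (h0 : lam 0 = 0)
    (hode : ∀ t : ℝ, 0 ≤ t → deriv lam t = Real.exp (-lam t) * (1 + lam t)) :
    ∀ δ : ℝ, 0 < δ → δ < 1 → ∃ ε₀ : ℝ, 0 < ε₀ ∧ ε₀ < 1 ∧
      ∀ ε : ℝ, 0 < ε → ε < ε₀ → ∀ r : ℕ → ℝ, memR Δ r →
        ∀ lamp : ℝ → ℝ, Differentiable ℝ lamp → lamp 0 = 0 →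
          (∀ t : ℝ, 0 ≤ t → deriv lamp t = Real.exp (-lamp t) *
            (1 + lamp t + ε * ∑ k ∈ Finset.Icc 2 (Δ - 1),
              lamp t ^ k / (Nat.factorial k : ℝ) * tailS Δ r (k + 1))) →
          ∀ t : ℝ, 0 ≤ t → t ≤ 2 / (ε * Upsilon Δ r) →
            lam t + (1 - δ) * ε * LamErr lam Δ r t ≤ lamp t ∧
            lamp t ≤ lam t + (1 + δ) * ε * LamErr lam Δ r t := by
  intro δ hδ hδ1
  have hC := one_le_squeezeConst (by omega : 1 ≤ Δ)
  have hδC : δ ^ 2 / squeezeConst Δ < 1 := (div_lt_one (by positivity)).mpr (by nlinarith)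
  refine ⟨δ ^ 2 / squeezeConst Δ, by positivity, hδC, ?_⟩
  intro ε hε hεδ r hr lamp hlamp hlamp0 hode_p t ht htT
  have hS0 : ∀ x, 0 ≤ x → 0 ≤ ε * tailPoly Δ r x := fun x hx =>
    mul_nonneg hε.le (tailPoly_nonneg hr hx)
  have hode' : ∀ t, 0 ≤ t → deriv lam t = exp (-lam t) * (1 + lam t + (0 : ℝ → ℝ) (lam t)) := by
    simpa using hode
  have ha := nonneg_of_deriv_eq_exp_neg_mul (fun _ _ => le_rfl) hdiff h0 hode' ht
  have hb := nonneg_of_deriv_eq_exp_neg_mul hS0 hlamp hlamp0 hode_p ht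
  have hta := integral_exp_div_eq_of_deriv_eq_exp_neg_mul (fun _ _ => le_rfl) hdiff h0 hode'
    continuousOn_const ht
  have htb := integral_exp_div_eq_of_deriv_eq_exp_neg_mul hS0 hlamp hlamp0 hode_p
    ((continuous_tailPoly Δ r).const_mul ε).continuousOn ht
  simp only [add_zero] at hta
  have hη := eps_mul_pow_le_of_integral_le hr (by omega) hδ hε (hεδ.trans hδC).le hεδ.le hb
    (htb.trans_le htT)
  obtain ⟨hlo, hup⟩ := sub_mul_exp_squeeze_of_integral_eq (continuous_tailPoly Δ r).continuousOn
    (fun x => tailPoly_nonneg hr) hε.le (fun x hx hxb => (tailPoly_le hr hx).trans (by gcongr))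
    hδ1 ha hb hη (hta.trans htb.symm)
  rw [← lamErr_mul_exp Δ r (hode t ht), ← mul_assoc] at hlo hup
  have he := exp_pos (lam t)
  constructor
  · linarith [le_of_mul_le_mul_right hlo he]
  · linarith [le_of_mul_le_mul_right hup he]
end
end
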